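/- Pascal staircase specialization: let P = P_{1/(1−zy)} be the Pascal staircase with first column v_s = y^{s−1}, and define W(d, A) = Σ_{i,j} p_{d+1−i, j+1} S_i(−A) S_{j, d−i−j}(x_1 + x_2) for the alphabet A = {x_1 + x_2} of cardinality one. Then W(0) = 1 and for d ≥ 1, W(d, {x_1+x_2}) = (y−1) y^{d−1} S_d(x_1 + x_2). -/

import Mathlib

open scoped Classical

noncomputable section

/-- The generating series `∏_{a ∈ A} (1 - a z)` of an alphabet `A`. -/
def genS {R : Type*} [CommRing R] (A : Multiset R) : PowerSeries R :=
  (A.map (fun a => 1 - PowerSeries.C a * PowerSeries.X)).prod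

/-- The complete function `S_j(A - B)` of a difference of alphabets, defined by the
generating series `∑ S_j(A-B) z^j = ∏_{b∈B}(1-bz) / ∏_{a∈A}(1-az)`. -/
def SD {R : Type*} [CommRing R] (A B : Multiset R) (j : ℤ) : R :=
  if j < 0 then 0
  else PowerSeries.coeff j.toNat (genS B * PowerSeries.invOfUnit (genS A) 1)

/-- The Schur function `S_I(A - B)` for an index sequence `I` (written in the weakly
increasing convention), given by the Jacobi–Trudi determinant `|S_{i_q + q - p}(A-B)|`. -/
def SchurD {R : Type*} [CommRing R] (A B : Multiset R) {s : ℕ} (I : Fin s → ℕ) : R :=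
  Matrix.det (Matrix.of fun p q : Fin s => SD A B ((I q : ℤ) + (q : ℤ) - (p : ℤ)))

/-- The resultant `R(A,B) = ∏_{a∈A, b∈B} (a - b)` of two alphabets. -/
def Res {R : Type*} [CommRing R] (A B : Multiset R) : R :=
  (A.map (fun a => (B.map (fun b => a - b)).prod)).prod


/-- The Pascal staircase `[p_{s,t}]` (1-indexed) with first column `p_{s,1} = v s`,
zero pattern `p_{s,t} = 0` for `2(t−1) > s−1`, and recursion
`p_{s+1,t} = p_{s,t−1} + p_{s,t}`. -/
def pstair {R : Type*} [CommRing R] (v : ℕ → R) : ℕ → ℕ → R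
  | 0, _ => 0
  | _ + 1, 0 => 0
  | s + 1, 1 => v (s + 1)
  | s + 1, t + 2 =>
    if 2 * (t + 1) > s then 0 else pstair v s (t + 1) + pstair v s (t + 2)

/-- `W(d, A) = Σ_{i,j} p_{d+1−i, j+1} · S_i(−A) · S_{(j, d−i−j)}(x_1, x_2)`. -/
def Wfun {R : Type*} [CommRing R] (v : ℕ → R) (x1 x2 : R) (A : Multiset R) (d : ℕ) : R :=
  ∑ i ∈ Finset.range (d + 1), ∑ j ∈ Finset.range (d + 1),
    pstair v (d + 1 - i) (j + 1) * SD 0 A (i : ℤ)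
      * SchurD ({x1, x2} : Multiset R) 0 (![j, d - i - j] : Fin 2 → ℕ)

/-! Only `S_0(-A) = 1` and `S_1(-A) = -(x₁ + x₂)` are nonzero. The Pieri rule
`(x₁ + x₂) S_{j,m} = S_{j,m+1} + S_{j+1,m}` turns the `i = 1` part of `W(d+1, {x₁ + x₂})`
into two sums over the row `d + 1` of the staircase. One of them is shifted by a column,
and the Pascal recursion then matches the `i = 0` part term by term, up to the first column
and to the rows `s = 2t + 1` on the edge of the staircase, where the Schur function
`S_{t+1,t}` vanishes. What survives is `(v_{d+2} - v_{d+1}) S_{d+1}(x₁ + x₂)`, which is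
`(y - 1) y^d S_{d+1}(x₁ + x₂)` for `v_s = y^{s-1}`. -/

open PowerSeries Finset

section CompleteFunctions

variable {R : Type*} [CommRing R]

@[simp]
lemma genS_zero : genS (0 : Multiset R) = 1 := by
  simp [genS]

lemma constantCoeff_genS (A : Multiset R) : constantCoeff (genS A) = 1 := by
  simp [genS, map_multiset_prod, Multiset.map_map]

lemma SD_natCast (A B : Multiset R) (n : ℕ) :
    SD A B n = coeff n (genS B * invOfUnit (genS A) 1) := by
  simp [SD]

lemma SD_of_neg (A B : Multiset R) {j : ℤ} (h : j < 0) : SD A B j = 0 := if_pos h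

@[simp]
lemma SD_zero (A B : Multiset R) : SD A B 0 = 1 := by
  simpa [constantCoeff_genS] using SD_natCast A B 0

lemma SD_zero_left_natCast (B : Multiset R) (n : ℕ) : SD 0 B n = coeff n (genS B) := by
  have hinv : invOfUnit (1 : R⟦X⟧) 1 = 1 := by
    simpa using mul_invOfUnit (1 : R⟦X⟧) 1 (by simp)
  rw [SD_natCast, genS_zero, hinv, mul_one]

lemma SD_zero_singleton_one (c : R) : SD 0 {c} 1 = -c := by
  simpa [genS] using SD_zero_left_natCast {c} 1

lemma SD_zero_singleton_of_two_le (c : R) {i : ℕ} (hi : 2 ≤ i) : SD 0 {c} i = 0 := by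
  obtain ⟨k, rfl⟩ := Nat.exists_eq_add_of_le' hi
  rw [SD_zero_left_natCast]
  simp [genS]

/-- Read off from `(1 - a z)(1 - b z) ∑ h_n z^n = 1`. -/
lemma SD_pair_succ (a b : R) (n : ℕ) :
    SD {a, b} 0 ((n : ℤ) + 1) =
      (a + b) * SD {a, b} 0 n - a * b * SD {a, b} 0 ((n : ℤ) - 1) := by
  rw [show (n : ℤ) + 1 = ((n + 1 : ℕ) : ℤ) by push_cast; ring, SD_natCast, SD_natCast,
    genS_zero, one_mul]
  set F := invOfUnit (genS ({a, b} : Multiset R)) 1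
  have hF : genS {a, b} * F = 1 := mul_invOfUnit _ 1 (by simp [constantCoeff_genS])
  have hgenS : genS ({a, b} : Multiset R) = 1 - C (a + b) * X + C (a * b) * X ^ 2 := by
    simp only [genS, Multiset.insert_eq_cons, Multiset.map_cons, Multiset.prod_cons,
      Multiset.map_singleton, Multiset.prod_singleton, map_add, map_mul]
    ring
  have hrec : F = 1 + X * (C (a + b) * F - C (a * b) * (X * F)) := by
    rw [hgenS] at hF
    linear_combination hF
  have hcoeff := congrArg (coeff (n + 1)) hrec
  rw [map_add, coeff_one, if_neg n.succ_ne_zero, zero_add, coeff_succ_X_mul, map_sub,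
    coeff_C_mul, coeff_C_mul] at hcoeff
  rw [hcoeff]
  rcases n with _ | m
  · simp [SD_of_neg]
  · rw [show ((m + 1 : ℕ) : ℤ) - 1 = m by push_cast; ring, SD_natCast, genS_zero, one_mul,
      coeff_succ_X_mul]

end CompleteFunctions

section SchurFunctions

variable {R : Type*} [CommRing R]

lemma SchurD_fin_two (A B : Multiset R) (j m : ℕ) :
    SchurD A B ![j, m] =
      SD A B j * SD A B m - SD A B ((m : ℤ) + 1) * SD A B ((j : ℤ) - 1) := by
  simp [SchurD, Matrix.det_fin_two]

lemma SchurD_fin_two_zero_left (A B : Multiset R) (m : ℕ) : SchurD A B ![0, m] = SD A B m := by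
  simp [SchurD_fin_two, SD_of_neg]

lemma SchurD_fin_two_succ_self (A B : Multiset R) (j : ℕ) : SchurD A B ![j + 1, j] = 0 := by
  rw [SchurD_fin_two]
  push_cast
  ring_nf

lemma SchurD_pair_pieri (a b : R) (j m : ℕ) :
    (a + b) * SchurD {a, b} 0 ![j, m] =
      SchurD {a, b} 0 ![j, m + 1] + SchurD {a, b} 0 ![j + 1, m] := by
  have hj := SD_pair_succ a b j
  have hm := SD_pair_succ a b (m + 1)
  simp only [SchurD_fin_two]
  push_cast at *
  linear_combination (norm := ring_nf) -SD {a, b} 0 m * hj + SD {a, b} 0 ((j : ℤ) - 1) * hm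

end SchurFunctions

section PascalStaircase

variable {R : Type*} [CommRing R] (v : ℕ → R)

@[simp]
lemma pstair_succ_one (s : ℕ) : pstair v (s + 1) 1 = v (s + 1) := rfl

lemma pstair_eq_zero_of_le {s t : ℕ} (h : s ≤ 2 * t) : pstair v s (t + 1) = 0 := by
  rcases s with _ | s
  · rfl
  rcases t with _ | t
  · omega
  · rw [pstair, if_pos (by omega)]

lemma pstair_succ_succ {s t : ℕ} (h : 2 * (t + 1) ≤ s) :
    pstair v (s + 1) (t + 2) = pstair v s (t + 1) + pstair v s (t + 2) := by
  rw [pstair, if_neg (by omega)]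

/-- Outside the staircase both sides vanish, except on the row `s = 2t + 1`, where
`S_{t+1,t} = 0` does. -/
lemma pstair_succ_succ_mul_SchurD (A B : Multiset R) (s t : ℕ) :
    pstair v (s + 1) (t + 2) * SchurD A B ![t + 1, s - (t + 1)] =
      (pstair v s (t + 1) + pstair v s (t + 2)) * SchurD A B ![t + 1, s - (t + 1)] := by
  by_cases h : 2 * (t + 1) ≤ s
  · rw [pstair_succ_succ v h]
  have h₁ : pstair v (s + 1) (t + 2) = 0 := pstair_eq_zero_of_le v (by omega)
  have h₂ : pstair v s (t + 2) = 0 := pstair_eq_zero_of_le v (by omega)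
  rw [h₁, h₂, zero_mul, add_zero]
  rcases (by omega : s ≤ 2 * t ∨ s = 2 * t + 1) with hs | rfl
  · rw [pstair_eq_zero_of_le v hs, zero_mul]
  · rw [show 2 * t + 1 - (t + 1) = t by omega, SchurD_fin_two_succ_self, mul_zero]

end PascalStaircase

section Wfun

variable {R : Type*} [CommRing R] (v : ℕ → R)

lemma Wfun_zero (a b : R) (A : Multiset R) : Wfun v a b A 0 = v 1 := by
  simp [Wfun, SchurD_fin_two_zero_left]

lemma Wfun_singleton_succ (a b c : R) (d : ℕ) :
    Wfun v a b {c} (d + 1) =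
      ∑ j ∈ range (d + 2), pstair v (d + 2) (j + 1) * SchurD {a, b} 0 ![j, d + 1 - j]
        - c * ∑ j ∈ range (d + 2), pstair v (d + 1) (j + 1) * SchurD {a, b} 0 ![j, d - j] := by
  rw [Wfun, sum_range_succ', sum_range_succ', sum_eq_zero fun i _ => sum_eq_zero fun j _ => by
    rw [SD_zero_singleton_of_two_le c (i := i + 1 + 1) (by omega), mul_zero, zero_mul]]
  simp [SD_zero_singleton_one, mul_sum, mul_left_comm c, mul_assoc, neg_add_eq_sub]

lemma Wfun_singleton_add_succ (a b : R) (d : ℕ) :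
    Wfun v a b {a + b} (d + 1) =
      (v (d + 2) - v (d + 1)) * SD {a, b} 0 ((d + 1 : ℕ) : ℤ) := by
  set g : ℕ → R := fun j => pstair v (d + 1) (j + 1) * SchurD {a, b} 0 ![j, d + 1 - j] with hg
  have hfirst :
      ∑ j ∈ range (d + 2), pstair v (d + 2) (j + 1) * SchurD {a, b} 0 ![j, d + 1 - j] =
        v (d + 2) * SD {a, b} 0 ((d + 1 : ℕ) : ℤ) + ∑ j ∈ range (d + 1),
          (pstair v (d + 1) (j + 1) + pstair v (d + 1) (j + 2)) *
            SchurD {a, b} 0 ![j + 1, d - j] := by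
    rw [sum_range_succ', add_comm]
    congr 1
    · simp [SchurD_fin_two_zero_left]
    · refine sum_congr rfl fun j _ => ?_
      have h := pstair_succ_succ_mul_SchurD v {a, b} 0 (d + 1) j
      rwa [Nat.add_sub_add_right] at h ⊢
  have hpieri :
      (a + b) * ∑ j ∈ range (d + 2), pstair v (d + 1) (j + 1) * SchurD {a, b} 0 ![j, d - j] =
        ∑ j ∈ range (d + 1),
          (g j + pstair v (d + 1) (j + 1) * SchurD {a, b} 0 ![j + 1, d - j]) := by
    rw [mul_sum, sum_range_succ, pstair_eq_zero_of_le v (by omega), zero_mul, mul_zero, add_zero]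
    refine sum_congr rfl fun j hj => ?_
    rw [mul_left_comm, SchurD_pair_pieri, mul_add, show d - j + 1 = d + 1 - j by
      simp only [mem_range] at hj; omega]
  have htelescope :
      ∑ j ∈ range (d + 1), (g (j + 1) - g j) =
        -v (d + 1) * SD {a, b} 0 ((d + 1 : ℕ) : ℤ) := by
    rw [sum_range_sub]
    simp [hg, pstair_eq_zero_of_le, SchurD_fin_two_zero_left]
  rw [Wfun_singleton_succ, hfirst, hpieri, add_sub_assoc, ← sum_sub_distrib,
    sum_congr rfl fun j _ => show _ = g (j + 1) - g j by
      simp only [hg, Nat.add_sub_add_right]; ring,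
    htelescope]
  ring

end Wfun

/-- Pascal staircase specialization: for the Pascal staircase `P_{1/(1−zy)}` with first
column `v_s = y^{s−1}` and the one-element alphabet `A = {x_1 + x_2}`, one has
`W(0) = 1` and `W(d, {x_1+x_2}) = (y−1) y^{d−1} S_d(x_1 + x_2)` for `d ≥ 1`,
where `x_1, x_2, y` are indeterminates and `S_d(x_1+x_2)` is the complete homogeneous
symmetric polynomial of degree `d` in `x_1, x_2`. -/
theorem pascal_staircase_specialization :
    letI R := MvPolynomial (Fin 3) ℤ
    letI x1 : R := MvPolynomial.X 0
    letI x2 : R := MvPolynomial.X 1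
    letI y : R := MvPolynomial.X 2
    Wfun (fun s => y ^ (s - 1)) x1 x2 ({x1 + x2} : Multiset R) 0 = 1 ∧
      ∀ d : ℕ, 1 ≤ d →
        Wfun (fun s => y ^ (s - 1)) x1 x2 ({x1 + x2} : Multiset R) d
          = (y - 1) * y ^ (d - 1) * SD ({x1, x2} : Multiset R) 0 (d : ℤ) := by
  refine ⟨by simp [Wfun_zero], fun d hd => ?_⟩
  obtain ⟨d, rfl⟩ := Nat.exists_eq_add_of_le' hd
  rw [Wfun_singleton_add_succ]
  simp only [show d + 2 - 1 = d + 1 by omega, Nat.add_sub_cancel]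
  ring

end
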